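/- Let S_n = ∑_{i ≥ 0, n-4i ≥ 1} F_{n-4i} (with S_0 = 0), let φ = (1+√5)/2, and suppose f assigns to each positive integer N a far-difference representation f(N) = (P_N, Q_N) of N. Then, as n → ∞, the difference between the average number of positive summands and the average number of negative summands over integers in (S_{n-1}, S_n], namely (1/(S_n - S_{n-1}))·∑_{N=S_{n-1}+1}^{S_n} (|P_N| - |Q_N|), converges to φ/2. -/

import Mathlib

open Filter

/-- The golden mean `φ = (1+√5)/2`. -/
noncomputable def phi : ℝ := (1 + Real.sqrt 5) / 2

/-- `F n` is the `n`-th Fibonacci number in the paper's indexing: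
`F 1 = 1, F 2 = 2, F 3 = 3, F 4 = 5`, i.e. `F n = fib (n+1)`. -/
def F (n : ℕ) : ℕ := Nat.fib (n + 1)

/-- `S n = F_n + F_{n-4} + F_{n-8} + ⋯` (sum over `i ≥ 0` with `n - 4i ≥ 1`),
with `S 0 = 0`. -/
def S (n : ℕ) : ℕ := ∑ i ∈ Finset.range ((n + 3) / 4), F (n - 4 * i)

/-- `(P, Q)` is a far-difference representation of the integer `N`. -/
def IsFarDifference (N : ℤ) (P Q : Finset ℕ) : Prop :=
  (∀ i ∈ P, 0 < i) ∧ (∀ j ∈ Q, 0 < j) ∧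
  (∀ i ∈ P, ∀ j ∈ P, i < j → i + 4 ≤ j) ∧
  (∀ i ∈ Q, ∀ j ∈ Q, i < j → i + 4 ≤ j) ∧
  (∀ i ∈ P, ∀ j ∈ Q, i + 3 ≤ j ∨ j + 3 ≤ i) ∧
  N = (∑ i ∈ P, (F i : ℤ)) - ∑ j ∈ Q, (F j : ℤ)

/-!
Write `Z_n = S_{n+1} - S_n` for the length of the block `(S_n, S_{n+1}]` and `T_n` for the sum of
`|P_N| - |Q_N|` over it. A representation of `N` in this block has largest summand `+F_{n+1}`,
and since `F_{n+1} = S_n + S_{n-2} + 1` and `S_{n+1} = F_{n+1} + S_{n-3}`, removing that summand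
maps the block onto `[0, S_{n-2}]` (reflected, signs swapped) and `(0, S_{n-3}]` (shifted). Hence
`T_{n+3} + T_n = Z_{n+3}`, while `Z_{n+4} = Z_{n+3} + Z_{n+1} + Z_n`; so the defect
`2 T_{n+1} - Z_{n+1} - Z_n` flips sign every three steps and stays in `[-1, 1]`. Finally
`Z_{2k} = fib (k+1) ^ 2` and `Z_{2k+1} = fib (k+1) * fib (k+2)`, so `Z_n / Z_{n+1} → φ⁻¹` and
`T_{n+1} / Z_{n+1} → (1 + φ⁻¹) / 2 = φ / 2`.
-/

open Finset

lemma F_add_two (n : ℕ) : F (n + 2) = F (n + 1) + F n := by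
  simp only [F, Nat.fib_add_two]; ring

lemma F_pos (n : ℕ) : 0 < F n := Nat.fib_pos.mpr n.succ_pos

lemma S_succ (n : ℕ) : S (n + 1) = F (n + 1) + S (n - 3) := by
  have hlen : (n + 1 + 3) / 4 = (n - 3 + 3) / 4 + 1 := by omega
  rw [S, S, hlen, sum_range_succ', add_comm]
  congr 1
  refine sum_congr rfl fun i _ => ?_
  congr 1
  omega

/-- The truncated subtraction `n - 2` makes this hold for `n < 2` as well. -/
theorem F_succ : ∀ n, F (n + 1) = S n + S (n - 2) + 1
  | 0 => by decide
  | 1 => by decide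
  | 2 => by decide
  | 3 => by decide
  | n + 4 => by
    have h₁ : S (n + 4) = F (n + 4) + S n := S_succ (n + 3)
    have h₂ : S (n + 2) = F (n + 2) + S (n - 2) := S_succ (n + 1)
    have h₃ : F (n + 5) = F (n + 4) + F (n + 3) := F_add_two (n + 3)
    have h₄ : F (n + 3) = F (n + 2) + F (n + 1) := F_add_two (n + 1)
    rw [show n + 4 - 2 = n + 2 by omega, h₁, h₂, h₃, h₄, F_succ n]
    ring

lemma S_succ_eq_add (n : ℕ) : S (n + 1) = S n + S (n - 2) + S (n - 3) + 1 := by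
  rw [S_succ, F_succ]; ring

lemma S_strictMono : StrictMono S :=
  strictMono_nat_of_lt_succ fun n => by rw [S_succ_eq_add]; omega

lemma sum_F_le_S {P : Finset ℕ} (hpos : ∀ i ∈ P, 0 < i)
    (hgap : ∀ i ∈ P, ∀ j ∈ P, i < j → i + 4 ≤ j) {a : ℕ} (hle : ∀ i ∈ P, i ≤ a) :
    ∑ i ∈ P, F i ≤ S a := by
  induction P using Finset.induction_on_max generalizing a with
  | empty => simp
  | insert t P hlt ih =>
    have ht : 0 < t := hpos t (mem_insert_self t P)
    have hP : ∀ i ∈ P, i ≤ t - 4 := fun i hi => by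
      have := hgap i (mem_insert_of_mem hi) t (mem_insert_self t P) (hlt i hi)
      omega
    have hS : S t = F t + S (t - 4) := by
      obtain ⟨s, rfl⟩ := Nat.exists_eq_add_one.mpr ht
      simpa using S_succ s
    calc ∑ i ∈ insert t P, F i = F t + ∑ i ∈ P, F i :=
          sum_insert fun h => (hlt t h).false
      _ ≤ F t + S (t - 4) := by
          gcongr
          exact ih (fun i hi => hpos i (mem_insert_of_mem hi))
            (fun i hi j hj => hgap i (mem_insert_of_mem hi) j (mem_insert_of_mem hj)) hP
      _ = S t := hS.symm
      _ ≤ S a := S_strictMono.monotone (hle t (mem_insert_self t P))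

namespace IsFarDifference

variable {N : ℤ} {P Q : Finset ℕ}

lemma neg (h : IsFarDifference N P Q) : IsFarDifference (-N) Q P := by
  obtain ⟨hP, hQ, hPP, hQQ, hPQ, hN⟩ := h
  exact ⟨hQ, hP, hQQ, hPP, fun i hi j hj => (hPQ j hj i hi).symm, by omega⟩

lemma erase (h : IsFarDifference N P Q) {n : ℕ} (hn : n ∈ P) :
    IsFarDifference (N - F n) (P.erase n) Q := by
  obtain ⟨hP, hQ, hPP, hQQ, hPQ, hN⟩ := h
  refine ⟨fun i hi => hP i (mem_of_mem_erase hi), hQ,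
    fun i hi j hj => hPP i (mem_of_mem_erase hi) j (mem_of_mem_erase hj), hQQ,
    fun i hi => hPQ i (mem_of_mem_erase hi), ?_⟩
  rw [hN, ← add_sum_erase P _ hn]
  ring

lemma mem_Ioc_of_max_mem_left (h : IsFarDifference N P Q) {n : ℕ} (hn : n ∈ P)
    (hmax : ∀ i ∈ P ∪ Q, i ≤ n) : N ∈ Set.Ioc (S (n - 1) : ℤ) (S n) := by
  obtain ⟨hP, hQ, hPP, hQQ, hPQ, hN⟩ := h
  have hQn : ∀ j ∈ Q, j ≤ n - 3 := fun j hj => by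
    have := hPQ n hn j hj
    have := hmax j (mem_union_right P hj)
    omega
  have hsumP : ∑ i ∈ P, F i ≤ S n :=
    sum_F_le_S hP hPP fun i hi => hmax i (mem_union_left Q hi)
  have hsumQ : ∑ j ∈ Q, F j ≤ S (n - 3) := sum_F_le_S hQ hQQ hQn
  have hFn : F n ≤ ∑ i ∈ P, F i := single_le_sum (fun i _ => (F_pos i).le) hn
  have hF : F n = S (n - 1) + S (n - 3) + 1 := by
    obtain ⟨m, rfl⟩ := Nat.exists_eq_add_one.mpr (hP n hn)
    simpa using F_succ m
  rw [hN]
  constructor <;> linarith [(sum_nonneg fun j _ => (F_pos j).le : 0 ≤ ∑ j ∈ Q, F j)]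

lemma pos_of_max_mem_left (h : IsFarDifference N P Q) {n : ℕ} (hn : n ∈ P)
    (hmax : ∀ i ∈ P ∪ Q, i ≤ n) : 0 < N :=
  (Int.natCast_nonneg _).trans_lt (h.mem_Ioc_of_max_mem_left hn hmax).1

lemma neg_of_max_mem_right (h : IsFarDifference N P Q) {n : ℕ} (hn : n ∈ Q)
    (hmax : ∀ i ∈ P ∪ Q, i ≤ n) : N < 0 :=
  neg_pos.mp (h.neg.pos_of_max_mem_left hn (by rwa [union_comm]))

lemma exists_max_mem_left (h : IsFarDifference N P Q) (hN : 0 < N) :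
    ∃ n ∈ P, ∀ i ∈ P ∪ Q, i ≤ n := by
  have hne : (P ∪ Q).Nonempty := by
    rw [nonempty_iff_ne_empty, Ne, union_eq_empty]
    rintro ⟨rfl, rfl⟩
    simp [h.2.2.2.2.2] at hN
  refine ⟨(P ∪ Q).max' hne, ?_, fun i hi => le_max' _ i hi⟩
  rcases mem_union.mp (max'_mem _ hne) with hP | hQ
  · exact hP
  · exact absurd (h.neg_of_max_mem_right hQ fun i hi => le_max' _ i hi) hN.not_gt

lemma eq_empty_of_zero (h : IsFarDifference 0 P Q) : P = ∅ ∧ Q = ∅ := by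
  rw [← union_eq_empty, ← not_nonempty_iff_eq_empty]
  intro hne
  rcases mem_union.mp (max'_mem _ hne) with hP | hQ
  · exact (h.pos_of_max_mem_left hP fun i hi => le_max' _ i hi).false
  · exact (h.neg_of_max_mem_right hQ fun i hi => le_max' _ i hi).false

end IsFarDifference

lemma exists_le_S (N : ℕ) : ∃ n, N ≤ S n := ⟨N, S_strictMono.id_le N⟩

def blockIndex (N : ℕ) : ℕ := Nat.find (exists_le_S N)

lemma blockIndex_eq {N n : ℕ} (h₁ : S n < N) (h₂ : N ≤ S (n + 1)) : blockIndex N = n + 1 :=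
  (Nat.find_eq_iff _).mpr ⟨h₂, fun m hm => by
    have := S_strictMono.monotone (Nat.le_of_lt_succ hm)
    omega⟩

lemma F_succ_lt_two_mul {N n : ℕ} (h : S n < N) : F (n + 1) < 2 * N := by
  have := S_strictMono.monotone (n.sub_le 2)
  rw [F_succ]
  omega

lemma F_blockIndex_lt (N : ℕ) : F (blockIndex (N + 1)) < 2 * (N + 1) := by
  obtain ⟨n, hn⟩ : ∃ n, blockIndex (N + 1) = n + 1 :=
    Nat.exists_eq_add_one.mpr ((Nat.find_pos _).mpr (by simp [S]))
  rw [hn]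
  refine F_succ_lt_two_mul ?_
  have := Nat.find_min (exists_le_S (N + 1)) (n.lt_succ_self.trans_eq hn.symm)
  omega

/-- The greedy computation of `|P_N| - |Q_N|`: the top summand of `N` is `+F_n` with
`n = blockIndex N`, and the rest represents `N - F_n` or, with signs swapped, `F_n - N`. -/
def signedCount : ℕ → ℤ
  | 0 => 0
  | N + 1 =>
    if F (blockIndex (N + 1)) ≤ N + 1 then 1 + signedCount (N + 1 - F (blockIndex (N + 1)))
    else 1 - signedCount (F (blockIndex (N + 1)) - (N + 1))
decreasing_by
  · have := F_pos (blockIndex (N + 1)); omega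
  · have := F_blockIndex_lt N; omega

lemma signedCount_of_F_le {N n : ℕ} (h₁ : S n < N) (h₂ : N ≤ S (n + 1)) (h : F (n + 1) ≤ N) :
    signedCount N = 1 + signedCount (N - F (n + 1)) := by
  obtain ⟨M, rfl⟩ := Nat.exists_eq_add_one.mpr ((Nat.zero_le _).trans_lt h₁)
  rw [signedCount, blockIndex_eq h₁ h₂, if_pos h]

lemma signedCount_of_le_F {N n : ℕ} (h₁ : S n < N) (h : N ≤ F (n + 1)) :
    signedCount N = 1 - signedCount (F (n + 1) - N) := by
  have h₂ : N ≤ S (n + 1) := h.trans (by rw [S_succ]; omega)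
  rcases h.lt_or_eq with h | rfl
  · obtain ⟨M, rfl⟩ := Nat.exists_eq_add_one.mpr ((Nat.zero_le _).trans_lt h₁)
    rw [signedCount, blockIndex_eq h₁ h₂, if_neg h.not_ge]
  · rw [signedCount_of_F_le h₁ h₂ le_rfl, Nat.sub_self, signedCount]
    ring

theorem IsFarDifference.card_sub_card_eq_signedCount (N : ℕ) {P Q : Finset ℕ}
    (h : IsFarDifference N P Q) : (P.card : ℤ) - Q.card = signedCount N := by
  induction N using Nat.strong_induction_on generalizing P Q with
  | _ N ih =>
  rcases N.eq_zero_or_pos with rfl | hN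
  · obtain ⟨rfl, rfl⟩ := h.eq_empty_of_zero
    simp [signedCount]
  obtain ⟨n, hnP, hmax⟩ := h.exists_max_mem_left (by exact_mod_cast hN)
  obtain ⟨hlo, hhi⟩ := h.mem_Ioc_of_max_mem_left hnP hmax
  obtain ⟨m, rfl⟩ := Nat.exists_eq_add_one.mpr (h.1 n hnP)
  rw [add_tsub_cancel_right, Nat.cast_lt] at hlo
  rw [Nat.cast_le] at hhi
  have hcard : (P.card : ℤ) = (P.erase (m + 1)).card + 1 := by
    rw [card_erase_of_mem hnP, Nat.cast_sub (card_pos.mpr ⟨_, hnP⟩)]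
    ring
  rcases le_or_gt (F (m + 1)) N with hle | hlt
  · have hrest : IsFarDifference ((N - F (m + 1) : ℕ) : ℤ) (P.erase (m + 1)) Q := by
      rw [Nat.cast_sub hle]
      exact h.erase hnP
    rw [signedCount_of_F_le hlo hhi hle, ← ih _ (Nat.sub_lt hN (F_pos _)) hrest, hcard]
    ring
  · have hrest : IsFarDifference ((F (m + 1) - N : ℕ) : ℤ) Q (P.erase (m + 1)) := by
      convert (h.erase hnP).neg using 1
      push_cast [hlt.le]
      ring
    have := F_succ_lt_two_mul hlo
    rw [signedCount_of_le_F hlo hlt.le, ← ih _ (by omega) hrest, hcard]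
    ring

def blockSize (n : ℕ) : ℤ := S (n + 1) - S n

def blockSum (n : ℕ) : ℤ := ∑ N ∈ Icc (S n + 1) (S (n + 1)), signedCount N

def prefixSum (n : ℕ) : ℤ := ∑ N ∈ range (S n + 1), signedCount N

lemma blockSize_eq (n : ℕ) : blockSize n = S (n - 2) + S (n - 3) + 1 := by
  rw [blockSize, S_succ_eq_add]
  push_cast
  ring

lemma prefixSum_succ (n : ℕ) : prefixSum (n + 1) = prefixSum n + blockSum n := by
  rw [prefixSum, prefixSum, blockSum, ← Nat.Ico_zero_eq_range, ← Nat.Ico_zero_eq_range,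
    ← Ico_add_one_right_eq_Icc, sum_Ico_consecutive _ (Nat.zero_le _)]
  exact Nat.succ_le_succ (S_strictMono.monotone n.le_succ)

/-- The block `(S_n, S_{n+1}]` splits at `F_{n+1}` into a reflected copy of `[0, S_{n-2}]` and a
shifted copy of `(0, S_{n-3}]`. -/
lemma blockSum_eq (n : ℕ) :
    blockSum n = blockSize n - prefixSum (n - 2) + prefixSum (n - 3) := by
  have hF := F_succ n
  have hS := S_succ n
  have hlow : ∑ N ∈ Ico (S n + 1) (F (n + 1) + 1), signedCount N
      = S (n - 2) + 1 - prefixSum (n - 2) := by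
    have hg : ∀ N ∈ Ico (S n + 1) (F (n + 1) + 1),
        signedCount N = 1 - signedCount (F (n + 1) - N) := fun N hN => by
      rw [mem_Ico] at hN
      exact signedCount_of_le_F (by omega) (by omega)
    rw [sum_congr rfl hg, sum_sub_distrib, sum_Ico_reflect _ _ le_rfl, sum_const, Nat.card_Ico,
      Nat.sub_self, Nat.Ico_zero_eq_range, prefixSum, nsmul_one,
      show F (n + 1) + 1 - (S n + 1) = S (n - 2) + 1 by omega]
    push_cast
    ring
  have hhigh : ∑ N ∈ Ico (F (n + 1) + 1) (S (n + 1) + 1), signedCount N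
      = S (n - 3) + prefixSum (n - 3) := by
    have hg : ∀ N ∈ Ico (F (n + 1) + 1) (S (n + 1) + 1),
        signedCount N = 1 + signedCount (N - F (n + 1)) := fun N hN => by
      rw [mem_Ico] at hN
      exact signedCount_of_F_le (by omega) (by omega) (by omega)
    rw [sum_congr rfl hg, sum_add_distrib, sum_const, Nat.card_Ico, sum_Ico_eq_sum_range,
      prefixSum, sum_range_succ', show S (n + 1) + 1 - (F (n + 1) + 1) = S (n - 3) by omega]
    simp [signedCount, add_assoc, add_comm 1]
  rw [blockSum, ← Ico_add_one_right_eq_Icc,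
    ← sum_Ico_consecutive _ (by omega : S n + 1 ≤ F (n + 1) + 1) (by omega), hlow, hhigh,
    blockSize_eq]
  ring

lemma blockSum_add_three (n : ℕ) : blockSum (n + 3) + blockSum n = blockSize (n + 3) := by
  rw [blockSum_eq, show n + 3 - 2 = n + 1 by omega, show n + 3 - 3 = n by omega, prefixSum_succ]
  ring

lemma blockSum_of_lt_three {n : ℕ} (hn : n < 3) : blockSum n = 1 := by
  rw [blockSum_eq, blockSize_eq, show n - 2 = 0 by omega, show n - 3 = 0 by omega]
  simp [S]

lemma blockSize_add_four (n : ℕ) :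
    blockSize (n + 4) = blockSize (n + 3) + blockSize (n + 1) + blockSize n := by
  have h₁ := S_succ_eq_add (n + 1)
  have h₂ := S_succ_eq_add n
  simp only [blockSize_eq, show n + 4 - 2 = n + 2 by omega, show n + 4 - 3 = n + 1 by omega,
    show n + 3 - 2 = n + 1 by omega, show n + 3 - 3 = n by omega, show n + 1 - 2 = n - 1 by omega,
    show n + 1 - 3 = n - 2 by omega, show n + 1 + 1 = n + 2 by omega] at h₁ ⊢
  omega

theorem abs_two_mul_blockSum_sub_le :
    ∀ n, |2 * blockSum (n + 1) - blockSize (n + 1) - blockSize n| ≤ 1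
  | 0 => by rw [blockSum_of_lt_three (by omega)]; decide
  | 1 => by rw [blockSum_of_lt_three (by omega)]; decide
  | 2 => by
    have h := blockSum_add_three 0
    rw [blockSum_of_lt_three (n := 0) (by omega)] at h
    rw [show blockSum (2 + 1) = blockSize 3 - 1 by linarith]
    decide
  | n + 3 => by
    have h₁ := blockSum_add_three (n + 1)
    have h₂ := blockSize_add_four n
    rw [show 2 * blockSum (n + 3 + 1) - blockSize (n + 3 + 1) - blockSize (n + 3)
      = -(2 * blockSum (n + 1) - blockSize (n + 1) - blockSize n) by linarith, abs_neg]
    exact abs_two_mul_blockSum_sub_le n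

theorem blockSize_eq_fib_mul :
    ∀ n, blockSize n = Nat.fib (n / 2 + 1) * Nat.fib ((n + 1) / 2 + 1)
  | 0 => by decide
  | 1 => by decide
  | 2 => by decide
  | 3 => by decide
  | n + 4 => by
    rw [blockSize_add_four, blockSize_eq_fib_mul n, blockSize_eq_fib_mul (n + 1),
      blockSize_eq_fib_mul (n + 3), show (n + 4) / 2 = n / 2 + 2 by omega,
      show (n + 4 + 1) / 2 = (n + 1) / 2 + 2 by omega, show (n + 3) / 2 = (n + 1) / 2 + 1 by omega,
      show (n + 1 + 1) / 2 = n / 2 + 1 by omega]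
    simp only [Nat.fib_add_two]
    push_cast
    ring

open Real goldenRatio

lemma blockSize_pos (n : ℕ) : 0 < blockSize n := by
  rw [blockSize_eq]
  positivity

lemma blockSize_div_blockSize_succ (n : ℕ) :
    (blockSize n : ℝ) / blockSize (n + 1) = Nat.fib (n / 2 + 1) / Nat.fib (n / 2 + 1 + 1) := by
  rw [blockSize_eq_fib_mul, blockSize_eq_fib_mul, show (n + 1 + 1) / 2 = n / 2 + 1 by omega]
  push_cast
  rw [mul_comm (Nat.fib ((n + 1) / 2 + 1) : ℝ), mul_div_mul_right]
  exact_mod_cast (Nat.fib_pos.mpr (Nat.succ_pos _)).ne'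

lemma tendsto_blockSize_div_blockSize_succ :
    Tendsto (fun n => (blockSize n : ℝ) / blockSize (n + 1)) atTop (nhds (-ψ)) := by
  simp_rw [blockSize_div_blockSize_succ]
  exact tendsto_fib_div_fib_succ_atTop.comp
    ((tendsto_add_atTop_nat 1).comp (Nat.tendsto_div_const_atTop two_ne_zero))

lemma tendsto_blockSize_atTop : Tendsto (fun n => (blockSize n : ℝ)) atTop atTop := by
  refine tendsto_atTop_mono (fun n => ?_) (tendsto_natCast_atTop_atTop.comp
    (S_strictMono.tendsto_atTop.comp (tendsto_sub_atTop_nat 2)))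
  have : (S (n - 2) : ℤ) ≤ blockSize n := by
    rw [blockSize_eq]
    omega
  show (S (n - 2) : ℝ) ≤ blockSize n
  exact_mod_cast this

theorem tendsto_blockSum_div_blockSize :
    Tendsto (fun n => (blockSum (n + 1) : ℝ) / blockSize (n + 1)) atTop (nhds (φ / 2)) := by
  set D : ℕ → ℤ := fun n => 2 * blockSum (n + 1) - blockSize (n + 1) - blockSize n
  have hsplit : ∀ n, (blockSum (n + 1) : ℝ) / blockSize (n + 1)
      = (1 + blockSize n / blockSize (n + 1)) / 2 + D n / (2 * blockSize (n + 1)) := fun n => by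
    have := (blockSize_pos (n + 1)).ne'
    field_simp
    push_cast [D]
    ring
  have hD : Tendsto (fun n => (D n : ℝ) / (2 * blockSize (n + 1))) atTop (nhds 0) := by
    refine squeeze_zero_norm (fun n => ?_) (tendsto_inv_atTop_zero.comp
      (tendsto_blockSize_atTop.comp (tendsto_add_atTop_nat 1)))
    have hZ : (0 : ℝ) < blockSize (n + 1) := by exact_mod_cast blockSize_pos (n + 1)
    calc ‖(D n : ℝ) / (2 * blockSize (n + 1))‖ = |(D n : ℝ)| / (2 * blockSize (n + 1)) := by
          rw [norm_div, Real.norm_eq_abs, Real.norm_of_nonneg (by positivity)]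
      _ ≤ 1 / (2 * blockSize (n + 1)) := by
          gcongr
          exact_mod_cast abs_two_mul_blockSum_sub_le n
      _ ≤ (blockSize (n + 1) : ℝ)⁻¹ := by
          rw [one_div]
          exact inv_anti₀ hZ (by linarith)
  have hlim := ((tendsto_blockSize_div_blockSize_succ.const_add 1).div_const 2).add hD
  rw [← sub_eq_add_neg, one_sub_goldenRatio, add_zero] at hlim
  exact hlim.congr fun n => (hsplit n).symm

/-- The average of (number of positive summands minus number of negative
summands) in far-difference representations of integers in `(S_{n-1}, S_n]`
converges to `φ/2`. -/
theorem far_difference_mean_difference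
    (f : ℕ → Finset ℕ × Finset ℕ)
    (hf : ∀ N : ℕ, 0 < N → IsFarDifference (N : ℤ) (f N).1 (f N).2) :
    Tendsto (fun n : ℕ =>
        (∑ N ∈ Finset.Icc (S (n - 1) + 1) (S n),
            (((f N).1.card : ℝ) - ((f N).2.card : ℝ))) /
          ((S n : ℝ) - (S (n - 1) : ℝ)))
      atTop (nhds (phi / 2)) := by
  rw [show phi = φ from rfl, ← tendsto_add_atTop_iff_nat 2]
  refine tendsto_blockSum_div_blockSize.congr fun n => ?_
  rw [blockSum, blockSize, Int.cast_sum]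
  push_cast
  refine congrArg₂ _ (sum_congr rfl fun N hN => ?_) rfl
  rw [← (hf N (by rw [mem_Icc] at hN; omega)).card_sub_card_eq_signedCount]
  norm_cast
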